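/- Let A = Mₙ(ℂ) for some n ≥ 1. Then for every context C of A the Gelfand spectrum Σ_C is finite and discrete. Consequently every open subset U of Σ* has all fibres U_C clopen in Σ_C, and the map I from clopen subobjects of the spectral presheaf (families S assigning to each context C a clopen subset S_C ⊆ Σ_C such that λ ∈ S_C and D ⊆ C imply λ|_D ∈ S_D) to open subsets of Σ*, given by I(S) := {(C,λ) ∈ Σ : λ ∈ S_C}, is a bijection. -/

import Mathlib

/-!
A context `C` is a finite-dimensional commutative algebra, and its characters are linearly
independent linear functionals on it (Dedekind–Artin), so `Σ_C` is finite; being Hausdorff it is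
discrete. Then every subset of every `Σ_C` is clopen, the clopenness condition on a subobject is
vacuous, and `I` is inverted by taking fibres.
-/

open WeakDual

variable (n : ℕ)

/-- A classical context in `Mₙ(ℂ)`: a commutative unital star-subalgebra. -/
structure MContext where
  carrier : Subalgebra ℂ (Matrix (Fin n) (Fin n) ℂ)
  star_mem' : ∀ x ∈ carrier, star x ∈ carrier
  mul_comm' : ∀ x ∈ carrier, ∀ y ∈ carrier, x * y = y * x

variable {n}

/-- The Gelfand spectrum of a context: the character space of `C`. -/
abbrev MContext.Spec (C : MContext n) : Type _ := characterSpace ℂ C.carrier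

/-- The inclusion of a smaller context into a larger one, as a continuous linear map. -/
def MContext.inclCLM {D C : MContext n} (h : D.carrier ≤ C.carrier) :
    D.carrier →L[ℂ] C.carrier where
  toLinearMap := (Subalgebra.inclusion h).toLinearMap
  cont := continuous_induced_rng.mpr continuous_subtype_val

/-- Restriction of a character along an inclusion of contexts. -/
noncomputable def MContext.restrictChar {D C : MContext n} (h : D.carrier ≤ C.carrier)
    (lam : C.Spec) : D.Spec :=
  ⟨(lam : WeakDual ℂ C.carrier).comp (MContext.inclCLM h), by
    constructor
    · intro h0
      have h1 : (lam : WeakDual ℂ C.carrier).comp (MContext.inclCLM h) (1 : D.carrier) = 0 := by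
        rw [h0]; rfl
      have h2 : (lam : WeakDual ℂ C.carrier).comp (MContext.inclCLM h) (1 : D.carrier) = 1 := by
        show lam ((MContext.inclCLM h) (1 : D.carrier)) = 1
        have h3 : (MContext.inclCLM h) (1 : D.carrier) = (1 : C.carrier) := rfl
        rw [h3]
        exact map_one lam
      rw [h1] at h2
      exact zero_ne_one h2
    · intro x y
      show lam ((MContext.inclCLM h) (x * y))
          = lam ((MContext.inclCLM h) x) * lam ((MContext.inclCLM h) y)
      have h4 : (MContext.inclCLM h) (x * y)
          = (MContext.inclCLM h) x * (MContext.inclCLM h) y := rfl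
      rw [h4]
      exact map_mul lam _ _⟩

/-- The disjoint union of all Gelfand spectra of contexts. -/
abbrev MSigmaSpace (n : ℕ) : Type _ := (C : MContext n) × C.Spec

/-- The topology `𝒪 Σ*` of the contravariant approach: a set is open iff each of its fibres
is open and it is closed under restriction of characters to smaller contexts. -/
instance : TopologicalSpace (MSigmaSpace n) where
  IsOpen U := (∀ C : MContext n, IsOpen {lam : C.Spec | Sigma.mk C lam ∈ U}) ∧
    ∀ (C D : MContext n) (h : D.carrier ≤ C.carrier) (lam : C.Spec),
      Sigma.mk C lam ∈ U → Sigma.mk D (MContext.restrictChar h lam) ∈ U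
  isOpen_univ := ⟨fun _ => isOpen_univ, fun _ _ _ _ _ => trivial⟩
  isOpen_inter := fun U V hU hV => ⟨fun C => (hU.1 C).inter (hV.1 C),
    fun C D h lam hm => ⟨hU.2 C D h lam hm.1, hV.2 C D h lam hm.2⟩⟩
  isOpen_sUnion := fun S hS => by
    constructor
    · intro C
      have h1 : {lam : C.Spec | Sigma.mk C lam ∈ ⋃₀ S} =
          ⋃ U ∈ S, {lam : C.Spec | Sigma.mk C lam ∈ U} := by
        ext lam; simp
      rw [h1]
      exact isOpen_biUnion fun U hU => (hS U hU).1 C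
    · rintro C D h lam ⟨U, hUS, hmU⟩
      exact ⟨U, hUS, (hS U hUS).2 C D h lam hmU⟩

variable (n) in
/-- A clopen subobject of the spectral presheaf of `Mₙ(ℂ)`. -/
structure MClopenSubobject where
  toFun : ∀ C : MContext n, Set C.Spec
  isClopen' : ∀ C : MContext n, IsClopen (toFun C)
  restrict_mem' : ∀ (C D : MContext n) (h : D.carrier ≤ C.carrier) (lam : C.Spec),
    lam ∈ toFun C → MContext.restrictChar h lam ∈ toFun D

/-- The map `I` sending a clopen subobject to the corresponding subset of `Σ*`. -/
def MClopenSubobject.embed (S : MClopenSubobject n) : Set (MSigmaSpace n) :=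
  {p : MSigmaSpace n | p.2 ∈ S.toFun p.1}

namespace WeakDual.CharacterSpace

variable {𝕜 A : Type*} [TopologicalSpace 𝕜] [TopologicalSpace A]

theorem toAlgHom_injective [CommRing 𝕜] [NoZeroDivisors 𝕜] [ContinuousAdd 𝕜]
    [ContinuousConstSMul 𝕜 𝕜] [Semiring A] [Algebra 𝕜 A] :
    Function.Injective (toAlgHom : characterSpace 𝕜 A → A →ₐ[𝕜] 𝕜) :=
  fun _ _ h => ext fun x => DFunLike.congr_fun h x

theorem finite_of_finiteDimensional [Field 𝕜] [ContinuousAdd 𝕜] [ContinuousConstSMul 𝕜 𝕜]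
    [Ring A] [Algebra 𝕜 A] [FiniteDimensional 𝕜 A] :
    Finite (characterSpace 𝕜 A) :=
  ((linearIndependent_algHom_toLinearMap 𝕜 A 𝕜).comp _ toAlgHom_injective).finite

end WeakDual.CharacterSpace

namespace MContext

instance finite_spec (C : MContext n) : Finite C.Spec :=
  CharacterSpace.finite_of_finiteDimensional

end MContext

namespace MClopenSubobject

theorem ext {S T : MClopenSubobject n} (h : ∀ C, S.toFun C = T.toFun C) : S = T := by
  cases S; cases T; congr; exact funext h

theorem isOpen_embed (S : MClopenSubobject n) : IsOpen S.embed :=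
  ⟨fun _ => isOpen_discrete _, S.restrict_mem'⟩

theorem embed_injective : Function.Injective (embed (n := n)) :=
  fun _ _ h => ext fun C => Set.ext fun lam => Set.ext_iff.mp h ⟨C, lam⟩

def ofIsOpen {U : Set (MSigmaSpace n)} (hU : IsOpen U) : MClopenSubobject n where
  toFun C := {lam | (⟨C, lam⟩ : MSigmaSpace n) ∈ U}
  isClopen' _ := isClopen_discrete _
  restrict_mem' C D h lam := hU.2 C D h lam

theorem embed_ofIsOpen {U : Set (MSigmaSpace n)} (hU : IsOpen U) : (ofIsOpen hU).embed = U :=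
  rfl

end MClopenSubobject

/-- For `A = Mₙ(ℂ)`: every context has a finite discrete Gelfand
spectrum; consequently every open subset of `Σ*` has clopen fibres, and the map `I` from
clopen subobjects of the spectral presheaf to open subsets of `Σ*` is a bijection. -/
theorem statement17 :
    (∀ C : MContext n, Finite C.Spec ∧ DiscreteTopology C.Spec) ∧
    (∀ U : Set (MSigmaSpace n), IsOpen U →
      ∀ C : MContext n, IsClopen {lam : C.Spec | (⟨C, lam⟩ : MSigmaSpace n) ∈ U}) ∧
    (∀ S : MClopenSubobject n, IsOpen S.embed) ∧
    Function.Injective (MClopenSubobject.embed (n := n)) ∧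
    (∀ U : Set (MSigmaSpace n), IsOpen U → ∃ S : MClopenSubobject n, S.embed = U) :=
  ⟨fun _ => ⟨inferInstance, inferInstance⟩, fun _ _ _ => isClopen_discrete _,
    MClopenSubobject.isOpen_embed, MClopenSubobject.embed_injective,
    fun _ hU => ⟨_, MClopenSubobject.embed_ofIsOpen hU⟩⟩
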